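/- For every integer n ≥ 0 and every real number z: Σ_{k=0}^{n} (−1)^{k(k−1)/2} C(n, k)_F z^k = ∏_{j=0}^{n−1} (1 + α^{n−1−j} β^{j} z). -/

import Mathlib

/-!
The Fibonomials satisfy the Pascal-type recurrence
`C(n+1,k+1) = α^(k+1) C(n,k+1) + β^(n-k) C(n,k)`, which comes from the Binet identity
`F_(n+1) = α^(k+1) F_(n-k) + β^(n-k) F_(k+1)`. Feeding it into the sum and using `αβ = -1` to
absorb the sign `(-1)^k` gives `P_(n+1)(z) = (1 + β^n z) P_n(α z)` for the left-hand side `P_n`,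
which is also the recurrence of the product.
-/

open Finset Real goldenRatio

/-- The Fibonomial coefficient `C(n,k)_F = ∏_{r=1}^{k} F_{n-r+1}/F_r`, as a real number.
It equals `0` when `k > n` and `1` when `k = 0`. -/
noncomputable def fibonomial (n k : ℕ) : ℝ :=
  ∏ r ∈ Finset.range k, (Nat.fib (n - r) : ℝ) / (Nat.fib (r + 1) : ℝ)

lemma coe_fib_add (m k : ℕ) :
    (Nat.fib (m + k) : ℝ) = φ ^ k * Nat.fib m + ψ ^ m * Nat.fib k := by
  have h5 : √5 ≠ 0 := by positivity
  rw [coe_fib_eq, coe_fib_eq, coe_fib_eq]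
  field_simp
  ring

lemma coe_fib_succ_ne_zero (k : ℕ) : (Nat.fib (k + 1) : ℝ) ≠ 0 :=
  Nat.cast_ne_zero.mpr (Nat.fib_pos.mpr k.succ_pos).ne'

lemma neg_one_pow_triangle_succ (k : ℕ) :
    (-1 : ℝ) ^ ((k + 1) * k / 2) = (-1) ^ (k * (k - 1) / 2) * (-1) ^ k := by
  have h : (k + 1) * k / 2 = k * (k - 1) / 2 + k := by
    simpa [Nat.choose_two_right, add_comm] using Nat.choose_succ_succ k 1
  rw [h, pow_add]

@[simp]
lemma fibonomial_zero_right (n : ℕ) : fibonomial n 0 = 1 := prod_range_zero _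

lemma fibonomial_succ_right (n k : ℕ) :
    fibonomial n (k + 1) = fibonomial n k * (Nat.fib (n - k) / Nat.fib (k + 1)) :=
  prod_range_succ _ _

lemma fibonomial_eq_zero_of_lt {n k : ℕ} (h : n < k) : fibonomial n k = 0 :=
  prod_eq_zero (mem_range.mpr h) (by simp)

lemma fib_succ_mul_fibonomial_succ_succ (n k : ℕ) :
    Nat.fib (k + 1) * fibonomial (n + 1) (k + 1) = Nat.fib (n + 1) * fibonomial n k := by
  induction k with
  | zero => simp [fibonomial_succ_right]
  | succ k ih =>
    have hk := coe_fib_succ_ne_zero k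
    have hk' := coe_fib_succ_ne_zero (k + 1)
    rw [fibonomial_succ_right (n + 1), fibonomial_succ_right n, Nat.add_sub_add_right]
    field_simp
    linear_combination (Nat.fib (n - k) : ℝ) * ih

lemma fibonomial_succ_succ {n k : ℕ} (hk : k ≤ n) :
    fibonomial (n + 1) (k + 1) =
      φ ^ (k + 1) * fibonomial n (k + 1) + ψ ^ (n - k) * fibonomial n k := by
  have hF := coe_fib_succ_ne_zero k
  have hbinet :
      (Nat.fib (n + 1) : ℝ) =
        φ ^ (k + 1) * Nat.fib (n - k) + ψ ^ (n - k) * Nat.fib (k + 1) := by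
    rw [← coe_fib_add, show n - k + (k + 1) = n + 1 by omega]
  apply mul_left_cancel₀ hF
  rw [fib_succ_mul_fibonomial_succ_succ, hbinet, fibonomial_succ_right]
  field_simp

lemma sum_fibonomial_succ (n : ℕ) (z : ℝ) :
    ∑ k ∈ range (n + 2), (-1 : ℝ) ^ (k * (k - 1) / 2) * fibonomial (n + 1) k * z ^ k =
      (1 + ψ ^ n * z) * ∑ k ∈ range (n + 1),
        (-1 : ℝ) ^ (k * (k - 1) / 2) * fibonomial n k * (φ * z) ^ k := by
  set P : ℕ → ℝ := fun k ↦ (-1 : ℝ) ^ (k * (k - 1) / 2) * fibonomial n k * (φ * z) ^ k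
  have hstep : ∀ k ∈ range (n + 1),
      (-1 : ℝ) ^ ((k + 1) * (k + 1 - 1) / 2) * fibonomial (n + 1) (k + 1) * z ^ (k + 1) =
        P (k + 1) + ψ ^ n * z * P k := by
    intro k hk
    have hkn : k ≤ n := Nat.lt_succ_iff.mp (mem_range.mp hk)
    have hψ : ψ ^ (n - k) * (-1) ^ k = ψ ^ n * φ ^ k := by
      rw [← goldenConj_mul_goldenRatio, mul_pow, ← mul_assoc, ← pow_add,
        Nat.sub_add_cancel hkn]
    simp only [P, fibonomial_succ_succ hkn, Nat.add_sub_cancel, neg_one_pow_triangle_succ, mul_pow]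
    linear_combination (-1 : ℝ) ^ (k * (k - 1) / 2) * fibonomial n k * z ^ (k + 1) * hψ
  have hshift : ∑ k ∈ range (n + 1), P (k + 1) = ∑ k ∈ range (n + 1), P k - 1 := by
    have hlast : P (n + 1) = 0 := by simp [P, fibonomial_eq_zero_of_lt n.lt_succ_self]
    have h0 : P 0 = 1 := by simp [P]
    have h := (sum_range_succ' P (n + 1)).symm.trans (sum_range_succ P (n + 1))
    rw [hlast, h0] at h
    linarith
  rw [sum_range_succ', sum_congr rfl hstep, sum_add_distrib, ← mul_sum, hshift]
  simp only [fibonomial_zero_right]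
  ring

lemma prod_range_succ_goldenRatio_goldenConj (n : ℕ) (z : ℝ) :
    ∏ j ∈ range (n + 1), (1 + φ ^ (n + 1 - 1 - j) * ψ ^ j * z) =
      (1 + ψ ^ n * z) * ∏ j ∈ range n, (1 + φ ^ (n - 1 - j) * ψ ^ j * (φ * z)) := by
  have hfactor : ∀ j ∈ range n,
      1 + φ ^ (n + 1 - 1 - j) * ψ ^ j * z = 1 + φ ^ (n - 1 - j) * ψ ^ j * (φ * z) := by
    intro j hj
    rw [show n + 1 - 1 - j = n - 1 - j + 1 by have := mem_range.mp hj; omega, pow_succ]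
    ring
  rw [prod_range_succ, prod_congr rfl hfactor, Nat.add_sub_cancel, Nat.sub_self, pow_zero,
    one_mul, mul_comm]

theorem fibonomial_generating_function (n : ℕ) (z : ℝ) :
    ∑ k ∈ Finset.range (n + 1),
        (-1 : ℝ) ^ (k * (k - 1) / 2) * fibonomial n k * z ^ k =
      ∏ j ∈ Finset.range n,
        (1 + ((1 + Real.sqrt 5) / 2) ^ (n - 1 - j) * ((1 - Real.sqrt 5) / 2) ^ j * z) := by
  change _ = ∏ j ∈ range n, (1 + φ ^ (n - 1 - j) * ψ ^ j * z)
  induction n generalizing z with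
  | zero => simp
  | succ n ih => rw [sum_fibonomial_succ, ih, prod_range_succ_goldenRatio_goldenConj]
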